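/- Let r₁(τ), r₂(τ) be the two roots of τ − r³ − r² = 0 with Re r_j(τ) < 0 for Re τ > 0. Then for τ = is with s ∈ ℝ, |s| → ∞, the quantity (e^{r₂x} − e^{r₁x})/(r₂ − r₁) is O(⟨τ⟩^{−1/3}) uniformly in x ≥ 0, and (r₂e^{r₁x} − r₁e^{r₂x})/(r₂ − r₁) is O(1) uniformly in x ≥ 0. -/

import Mathlib

/-!
Subtracting the cubic equations of two distinct roots gives `r₁² + r₁r₂ + r₂² + r₁ + r₂ = 0`, so
with `p = r₁ + r₂` one has `τ = -p(p+1)²` and `(r₁ - r₂)² = -p(3p+4)`. Every root has modulus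
`O(|τ|^{1/3})`, so the first identity forces `|p| ≳ |τ|^{1/3}` and the second then gives the
separation `|r₁ - r₂| ≳ |τ|^{1/3}`. As `Re rⱼ < 0` and `x ≥ 0`, the exponentials have modulus at
most `1`, and both kernels are bounded by their numerators over `|r₁ - r₂|`.
-/

open Complex

section Kernels

variable {a b : ℂ} {x : ℝ}

lemma norm_exp_mul_ofReal_le_one (ha : a.re ≤ 0) (hx : 0 ≤ x) : ‖exp (a * x)‖ ≤ 1 := by
  rw [norm_exp, re_mul_ofReal, Real.exp_le_one_iff]
  exact mul_nonpos_of_nonpos_of_nonneg ha hx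

lemma norm_exp_sub_exp_div_sub_le (ha : a.re ≤ 0) (hb : b.re ≤ 0) (hx : 0 ≤ x) :
    ‖(exp (b * x) - exp (a * x)) / (b - a)‖ ≤ 2 / ‖b - a‖ := by
  rw [norm_div]
  gcongr
  calc ‖exp (b * x) - exp (a * x)‖ ≤ ‖exp (b * x)‖ + ‖exp (a * x)‖ := norm_sub_le _ _
    _ ≤ 1 + 1 := add_le_add (norm_exp_mul_ofReal_le_one hb hx) (norm_exp_mul_ofReal_le_one ha hx)
    _ = 2 := by norm_num

lemma norm_mul_exp_sub_mul_exp_div_sub_le (ha : a.re ≤ 0) (hb : b.re ≤ 0) (hx : 0 ≤ x) :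
    ‖(b * exp (a * x) - a * exp (b * x)) / (b - a)‖ ≤ (‖a‖ + ‖b‖) / ‖b - a‖ := by
  rw [norm_div]
  gcongr
  calc ‖b * exp (a * x) - a * exp (b * x)‖
      ≤ ‖b‖ * ‖exp (a * x)‖ + ‖a‖ * ‖exp (b * x)‖ := by
        rw [← norm_mul, ← norm_mul]; exact norm_sub_le _ _
    _ ≤ ‖b‖ * 1 + ‖a‖ * 1 := by
        gcongr
        exacts [norm_exp_mul_ofReal_le_one ha hx, norm_exp_mul_ofReal_le_one hb hx]
    _ = ‖a‖ + ‖b‖ := by ring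

end Kernels

section CubicRoots

variable {τ r r₁ r₂ : ℂ} {u : ℝ}

lemma norm_le_two_mul_of_pow_three_add_sq_eq (hu : 1 ≤ u) (hτ : ‖τ‖ = u ^ 3)
    (hr : r ^ 3 + r ^ 2 = τ) : ‖r‖ ≤ 2 * u := by
  have hcube : ‖r‖ ^ 3 ≤ u ^ 3 + ‖r‖ ^ 2 := by
    rw [← hτ, ← norm_pow, ← norm_pow, ← hr]
    exact norm_le_add_norm_add _ _
  by_contra! h
  have ha1 : u ≤ ‖r‖ - 1 := by linarith
  have ha2 : 4 * u ^ 2 ≤ ‖r‖ ^ 2 := by nlinarith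
  nlinarith [mul_le_mul ha2 ha1 (by positivity) (by positivity), pow_pos (by linarith : 0 < u) 3]

lemma sq_add_mul_add_sq_add_add_eq_zero (h₁ : r₁ ^ 3 + r₁ ^ 2 = τ) (h₂ : r₂ ^ 3 + r₂ ^ 2 = τ)
    (hne : r₁ ≠ r₂) : r₁ ^ 2 + r₁ * r₂ + r₂ ^ 2 + r₁ + r₂ = 0 := by
  have h : (r₁ - r₂) * (r₁ ^ 2 + r₁ * r₂ + r₂ ^ 2 + r₁ + r₂) = 0 := by
    linear_combination h₁ - h₂
  exact (mul_eq_zero.mp h).resolve_left (sub_ne_zero.mpr hne)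

lemma div_four_le_norm_add_of_pow_three_add_sq_eq (hu : 4 ≤ u) (hτ : ‖τ‖ = u ^ 3)
    (h₁ : r₁ ^ 3 + r₁ ^ 2 = τ) (h₂ : r₂ ^ 3 + r₂ ^ 2 = τ) (hne : r₁ ≠ r₂) :
    u / 4 ≤ ‖r₁ + r₂‖ := by
  have hp : ‖r₁ + r₂‖ ≤ 4 * u := by
    linarith [norm_add_le r₁ r₂, norm_le_two_mul_of_pow_three_add_sq_eq (by linarith) hτ h₁,
      norm_le_two_mul_of_pow_three_add_sq_eq (by linarith) hτ h₂]
  have hprod : ‖r₁ + r₂‖ * ‖r₁ + r₂ + 1‖ ^ 2 = u ^ 3 := by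
    have hτp : τ = -((r₁ + r₂) * (r₁ + r₂ + 1) ^ 2) := by
      linear_combination -h₁ + (2 * r₁ + r₂ + 1) * sq_add_mul_add_sq_add_add_eq_zero h₁ h₂ hne
    rw [← hτ, hτp, norm_neg, norm_mul, norm_pow]
  have hp1 : u / 2 ≤ ‖r₁ + r₂ + 1‖ := by
    by_contra! h
    have hsq : ‖r₁ + r₂ + 1‖ ^ 2 < (u / 2) ^ 2 := pow_lt_pow_left₀ h (norm_nonneg _) two_ne_zero
    have := mul_le_mul_of_nonneg_right hp (sq_nonneg ‖r₁ + r₂ + 1‖)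
    have := mul_lt_mul_of_pos_left hsq (by linarith : 0 < 4 * u)
    nlinarith
  linarith [norm_add_le (r₁ + r₂) 1, norm_one (α := ℂ)]

lemma div_three_le_norm_sub_of_pow_three_add_sq_eq (hu : 16 ≤ u) (hτ : ‖τ‖ = u ^ 3)
    (h₁ : r₁ ^ 3 + r₁ ^ 2 = τ) (h₂ : r₂ ^ 3 + r₂ ^ 2 = τ) (hne : r₁ ≠ r₂) :
    u / 3 ≤ ‖r₁ - r₂‖ := by
  set p := r₁ + r₂
  have hp : u / 4 ≤ ‖p‖ := div_four_le_norm_add_of_pow_three_add_sq_eq (by linarith) hτ h₁ h₂ hne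
  have hsq : ‖r₁ - r₂‖ ^ 2 = ‖p‖ * ‖3 * p + 4‖ := by
    have hdiff : (r₁ - r₂) ^ 2 = -(p * (3 * p + 4)) := by
      linear_combination 4 * sq_add_mul_add_sq_add_add_eq_zero h₁ h₂ hne
    rw [← norm_pow, hdiff, norm_neg, norm_mul]
  have h3p : 3 * ‖p‖ - 4 ≤ ‖3 * p + 4‖ := by
    have := norm_le_add_norm_add (3 * p) 4
    rw [norm_mul] at this
    norm_num at this
    linarith
  nlinarith [mul_le_mul_of_nonneg_left h3p (norm_nonneg p), norm_nonneg (r₁ - r₂)]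

end CubicRoots

lemma inv_two_mul_le_one_add_sq_rpow {s u : ℝ} (hu : 0 ≤ u) (hs : |s| = u ^ 3) (h1 : 1 ≤ |s|) :
    (2 * u)⁻¹ ≤ (1 + s ^ 2) ^ (-(1 / 6 : ℝ)) := by
  have hu1 : 1 ≤ u := by
    by_contra! h
    linarith [pow_lt_one₀ hu h three_ne_zero]
  rw [Real.rpow_neg (by positivity)]
  gcongr
  calc (1 + s ^ 2) ^ (1 / 6 : ℝ) ≤ ((2 * u) ^ 6) ^ ((6 : ℕ) : ℝ)⁻¹ := by
        rw [show (1 / 6 : ℝ) = ((6 : ℕ) : ℝ)⁻¹ by norm_num]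
        gcongr
        rw [← sq_abs, hs]
        nlinarith [one_le_pow₀ hu1 (n := 6)]
    _ = 2 * u := Real.pow_rpow_inv_natCast (by positivity) (by norm_num)

/-- Uniform bounds for the boundary kernels: for `τ = is` with `|s|` large, if `r₁, r₂`
are the two roots of `r³ + r² = τ` with negative real part, then
`(e^{r₂x} − e^{r₁x})/(r₂ − r₁) = O(⟨τ⟩^{−1/3})` and
`(r₂e^{r₁x} − r₁e^{r₂x})/(r₂ − r₁) = O(1)`, uniformly in `x ≥ 0`. -/
theorem boundary_kernel_bounds :
    ∃ C > (0 : ℝ), ∃ S : ℝ, ∀ s : ℝ, S ≤ |s| → ∀ r₁ r₂ : ℂ,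
      r₁ ^ 3 + r₁ ^ 2 = Complex.I * (s : ℂ) →
      r₂ ^ 3 + r₂ ^ 2 = Complex.I * (s : ℂ) →
      r₁.re < 0 → r₂.re < 0 → r₁ ≠ r₂ →
      ∀ x : ℝ, 0 ≤ x →
        ‖(Complex.exp (r₂ * (x : ℂ)) - Complex.exp (r₁ * (x : ℂ))) / (r₂ - r₁)‖
            ≤ C * (1 + s ^ 2) ^ (-(1 / 6 : ℝ)) ∧
        ‖(r₂ * Complex.exp (r₁ * (x : ℂ)) - r₁ * Complex.exp (r₂ * (x : ℂ)))
            / (r₂ - r₁)‖ ≤ C := by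
  refine ⟨12, by norm_num, 16 ^ 3, fun s hs r₁ r₂ h₁ h₂ hre₁ hre₂ hne x hx => ?_⟩
  set u := |s| ^ ((3 : ℕ) : ℝ)⁻¹
  have hu3 : u ^ 3 = |s| := Real.rpow_inv_natCast_pow (abs_nonneg s) (by norm_num)
  have hu : 16 ≤ u := le_of_pow_le_pow_left₀ (by norm_num) (by positivity) (hu3 ▸ hs)
  have hτ : ‖I * s‖ = u ^ 3 := by simp [hu3]
  have hsep : u / 3 ≤ ‖r₂ - r₁‖ :=
    div_three_le_norm_sub_of_pow_three_add_sq_eq hu hτ h₂ h₁ hne.symm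
  have hr₁ := norm_le_two_mul_of_pow_three_add_sq_eq (by linarith) hτ h₁
  have hr₂ := norm_le_two_mul_of_pow_three_add_sq_eq (by linarith) hτ h₂
  constructor
  · calc _ ≤ 2 / ‖r₂ - r₁‖ := norm_exp_sub_exp_div_sub_le hre₁.le hre₂.le hx
      _ ≤ 2 / (u / 3) := by gcongr
      _ = 12 * (2 * u)⁻¹ := by field_simp; ring
      _ ≤ _ := by
        gcongr
        exact inv_two_mul_le_one_add_sq_rpow (by positivity) hu3.symm (by linarith)
  · calc _ ≤ (‖r₁‖ + ‖r₂‖) / ‖r₂ - r₁‖ := norm_mul_exp_sub_mul_exp_div_sub_le hre₁.le hre₂.le hx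
      _ ≤ (2 * u + 2 * u) / (u / 3) := by gcongr
      _ = 12 := by field_simp; ring
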